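/- arXiv:2508.01702 — 3 statements merged into one kernel-verified Lean document; each statement's English description precedes it below -/
import Mathlib

section
/- (Plotkin-like bound for irregular Lee-distance codes) Let D be an M×M matrix of nonnegative integers and suppose there exist vectors p_1,…,p_M ∈ Z_q^r with d_L(p_i,p_j) ≥ D_{ij} for all i,j. Then r ≥ (8/(M²q)) ∑_{i<j} D_{ij} if q is even, and r ≥ (8q/(M²(q²−1))) ∑_{i<j} D_{ij} if q is odd. -/
/-- Lee distance between two symbols of `ZMod q` (representatives in `{0,…,q-1}`). -/
def leeDistSym (q : ℕ) (x y : ZMod q) : ℕ := min (x - y).val (y - x).val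

/-- Lee distance between two vectors over `ZMod q`. -/
def leeDist {q n : ℕ} (x y : Fin n → ZMod q) : ℕ := ∑ i, leeDistSym q (x i) (y i)

/-- Lee weight of a symbol of `ZMod q`. -/
def leeWtSym (q : ℕ) (x : ZMod q) : ℕ := min x.val (q - x.val)

/-- Lee weight of a vector over `ZMod q`. -/
def leeWt {q n : ℕ} (x : Fin n → ZMod q) : ℕ := ∑ i, leeWtSym q (x i)

/-!
Let `s = ⌈q/2⌉` and attach to a symbol `a ∈ ℤ/q` the arc `A_a = a - {1, …, s}` of `s`
residues. Two such arcs overlap in exactly `s - d_L(a, b)` residues, so `d_L` is half a Hamming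
distance between indicator vectors of weight `s`. For `M` symbols, with `K(e)` the number of
arcs containing `e`, this gives `∑_{i,j} d_L(x_i, x_j) = M² s - ∑_e K(e)²`, and Cauchy–Schwarz
with `∑_e K(e) = M s` bounds it by `M² s (q - s) / q`, which is `M² q / 4` for even `q` and
`M² (q² - 1) / (4 q)` for odd `q`. Summing over the `r` coordinates and comparing with
`2 ∑_{i<j} D_{ij} ≤ ∑_{i,j} d_L(p_i, p_j)` gives the bound.
-/

open Finset

theorem sq_sum_card_le_card_mul_sum_sum_card_inter {ι κ : Type*} [Fintype ι] [Fintype κ]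
    [DecidableEq κ] (A : ι → Finset κ) :
    (∑ i, #(A i)) ^ 2 ≤ Fintype.card κ * ∑ i, ∑ j, #(A i ∩ A j) := by
  set K : κ → ℕ := fun e => ∑ i, if e ∈ A i then 1 else 0
  have hcard (t : Finset κ) : #t = ∑ e, if e ∈ t then 1 else 0 := by
    rw [← card_filter, filter_mem_eq_inter, univ_inter]
  have hsum : ∑ i, #(A i) = ∑ e, K e := by simp_rw [hcard]; exact sum_comm
  have hsq : ∑ i, ∑ j, #(A i ∩ A j) = ∑ e, K e ^ 2 := by
    simp_rw [hcard, K, sq, sum_mul_sum, ite_zero_mul_ite_zero, mul_one, mem_inter]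
    exact (sum_congr rfl fun i _ => sum_comm).trans sum_comm
  rw [hsum, hsq]
  exact sq_sum_le_card_mul_sum_sq

section LeeArc

variable {q : ℕ}

theorem two_mul_leeWtSym_le (c : ZMod q) : 2 * leeWtSym q c ≤ q := by
  rw [leeWtSym]; omega

theorem leeDistSym_eq_leeWtSym_sub [NeZero q] (a b : ZMod q) :
    leeDistSym q a b = leeWtSym q (b - a) := by
  rw [leeDistSym, leeWtSym, ← neg_sub, ZMod.neg_val, min_comm]
  split_ifs with h <;> simp [h]

theorem card_filter_mem_Icc_add_mod {s k : ℕ} (hq : 2 ≤ q) (hs : q ≤ 2 * s)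
    (hs' : 2 * s ≤ q + 1) (hk : k < q) :
    #{v ∈ range q | v ∈ Icc 1 s ∧ (v + k) % q ∈ Icc 1 s} = s - min k (q - k) := by
  -- the first interval is empty when `q < 2 k`, the second when `2 k ≤ q`
  have : {v ∈ range q | v ∈ Icc 1 s ∧ (v + k) % q ∈ Icc 1 s}
      = Icc 1 (s - k) ∪ Icc (q + 1 - k) s := by
    ext v
    simp only [mem_filter, mem_range, mem_union, mem_Icc]
    rcases lt_or_ge v q with hv | hv
    · rcases lt_or_ge (v + k) q with h | h
      · rw [Nat.mod_eq_of_lt h]; omega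
      · rw [Nat.mod_eq_sub_mod h, Nat.mod_eq_of_lt (by omega)]; omega
    · omega
  rw [this, card_union_of_disjoint, Nat.card_Icc, Nat.card_Icc]
  · omega
  · exact disjoint_left.2 fun v hv hv' => by simp only [mem_Icc] at hv hv'; omega

theorem card_filter_val_eq_card_filter_range [NeZero q] (P : ℕ → Prop) [DecidablePred P] :
    #{u : ZMod q | P u.val} = #{v ∈ range q | P v} := by
  refine card_nbij' ZMod.val (fun v => (v : ZMod q)) ?_ ?_ ?_ ?_
  · intro u hu
    simp_all [ZMod.val_lt]
  · intro v hv
    simp_all [Nat.mod_eq_of_lt]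
  · intro u _
    simp
  · intro v hv
    simp_all [Nat.mod_eq_of_lt]

def leeArc (s : ℕ) [NeZero q] (a : ZMod q) : Finset (ZMod q) := {e | (a - e).val ∈ Icc 1 s}

theorem card_leeArc_inter_leeArc [NeZero q] {s : ℕ} (hq : 2 ≤ q) (hs : q ≤ 2 * s)
    (hs' : 2 * s ≤ q + 1) (a b : ZMod q) :
    #(leeArc s a ∩ leeArc s b) = s - leeDistSym q a b := by
  have hshift : #(leeArc s a ∩ leeArc s b)
      = #{u : ZMod q | u.val ∈ Icc 1 s ∧ (u + (b - a)).val ∈ Icc 1 s} := by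
    refine card_nbij' (fun e => a - e) (fun u => a - u) ?_ ?_ ?_ ?_ <;> intro x hx <;>
      simp_all [leeArc, show ∀ x : ZMod q, b - (a - x) = x + (b - a) from fun x => by ring]
  rw [hshift]
  simp_rw [ZMod.val_add _ (b - a)]
  rw [card_filter_val_eq_card_filter_range fun v => v ∈ Icc 1 s ∧ (v + (b - a).val) % q ∈ Icc 1 s,
    card_filter_mem_Icc_add_mod hq hs hs' (ZMod.val_lt _), leeDistSym_eq_leeWtSym_sub, leeWtSym]

theorem card_leeArc [NeZero q] {s : ℕ} (hq : 2 ≤ q) (hs : q ≤ 2 * s)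
    (hs' : 2 * s ≤ q + 1) (a : ZMod q) : #(leeArc s a) = s := by
  simpa [leeDistSym] using card_leeArc_inter_leeArc hq hs hs' a a

end LeeArc

section PerCoordinate

variable {q : ℕ} {ι : Type*} [Fintype ι]

theorem mul_sum_sum_leeDistSym_le {s : ℕ} (hq : 2 ≤ q) (hs : q ≤ 2 * s) (hs' : 2 * s ≤ q + 1)
    (x : ι → ZMod q) :
    q * ∑ i, ∑ j, leeDistSym q (x i) (x j) ≤ Fintype.card ι ^ 2 * (s * (q - s)) := by
  have : NeZero q := ⟨by omega⟩
  have hcs := sq_sum_card_le_card_mul_sum_sum_card_inter fun i => leeArc s (x i)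
  simp only [card_leeArc hq hs hs', card_leeArc_inter_leeArc hq hs hs', ZMod.card, sum_const,
    card_univ, smul_eq_mul] at hcs
  have hsplit : ∑ i, ∑ j, (s - leeDistSym q (x i) (x j)) + ∑ i, ∑ j, leeDistSym q (x i) (x j)
      = Fintype.card ι ^ 2 * s := by
    have hle (i j : ι) : leeDistSym q (x i) (x j) ≤ s := by
      have := two_mul_leeWtSym_le (x j - x i)
      rw [leeDistSym_eq_leeWtSym_sub]; omega
    simp only [← sum_add_distrib, Nat.sub_add_cancel (hle _ _), sum_const, card_univ, smul_eq_mul]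
    ring
  zify [(by omega : s ≤ q)] at hcs hsplit ⊢
  nlinarith

theorem four_mul_sum_sum_leeDistSym_le_of_even (hq : 2 ≤ q) (he : Even q) (x : ι → ZMod q) :
    4 * ∑ i, ∑ j, leeDistSym q (x i) (x j) ≤ Fintype.card ι ^ 2 * q := by
  obtain ⟨s, rfl⟩ := he
  have h := mul_sum_sum_leeDistSym_le (s := s) hq (by omega) (by omega) x
  rw [Nat.add_sub_cancel] at h
  have hs : 0 < s := by omega
  nlinarith

theorem four_mul_mul_sum_sum_leeDistSym_le_of_odd (hq : 2 ≤ q) (ho : Odd q) (x : ι → ZMod q) :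
    4 * q * ∑ i, ∑ j, leeDistSym q (x i) (x j) ≤ Fintype.card ι ^ 2 * (q ^ 2 - 1) := by
  obtain ⟨k, rfl⟩ := ho
  have h := mul_sum_sum_leeDistSym_le (s := k + 1) hq (by omega) (by omega) x
  rw [show 2 * k + 1 - (k + 1) = k by omega] at h
  rw [show (2 * k + 1) ^ 2 - 1 = 4 * ((k + 1) * k) from Nat.sub_eq_of_eq_add (by ring)]
  nlinarith

end PerCoordinate

theorem mul_sum_sum_leeDist_le {q r : ℕ} {ι : Type*} [Fintype ι] (p : ι → Fin r → ZMod q)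
    {c b : ℕ} (h : ∀ x : ι → ZMod q, c * ∑ i, ∑ j, leeDistSym q (x i) (x j) ≤ b) :
    c * ∑ i, ∑ j, leeDist (p i) (p j) ≤ r * b := by
  calc c * ∑ i, ∑ j, leeDist (p i) (p j)
      = ∑ k, c * ∑ i, ∑ j, leeDistSym q (p i k) (p j k) := by
        rw [← mul_sum]
        congr 1
        simp only [leeDist]
        exact (sum_congr rfl fun i _ => sum_comm).trans sum_comm
    _ ≤ ∑ _k : Fin r, b := sum_le_sum fun k _ => h fun i => p i k
    _ = r * b := by simp

theorem leeDist_comm {q n : ℕ} (x y : Fin n → ZMod q) : leeDist x y = leeDist y x := by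
  simp only [leeDist, leeDistSym, min_comm]

theorem two_mul_sum_sum_ite_lt_le {ι : Type*} [Fintype ι] [LinearOrder ι] (D f : ι → ι → ℕ)
    (hf : ∀ i j, f i j = f j i) (hD : ∀ i j, D i j ≤ f i j) :
    2 * ∑ i, ∑ j, (if i < j then D i j else 0) ≤ ∑ i, ∑ j, f i j := by
  have hswap : ∑ i, ∑ j, (if j < i then f i j else 0) = ∑ i, ∑ j, if i < j then f i j else 0 := by
    rw [sum_comm]
    exact sum_congr rfl fun i _ => sum_congr rfl fun j _ => by rw [hf]
  calc 2 * ∑ i, ∑ j, (if i < j then D i j else 0)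
      ≤ 2 * ∑ i, ∑ j, if i < j then f i j else 0 := by
        gcongr with i _ j _
        split_ifs
        exacts [hD i j, le_rfl]
    _ = ∑ i, ∑ j, ((if i < j then f i j else 0) + if j < i then f i j else 0) := by
        simp only [sum_add_distrib, hswap, two_mul]
    _ ≤ ∑ i, ∑ j, f i j := by
        gcongr with i _ j _
        split_ifs with hij hji
        · exact (lt_asymm hij hji).elim
        all_goals omega

theorem plotkin_like_bound_irregular_lee (q r M : ℕ) (hq : 2 ≤ q)
    (D : Fin M → Fin M → ℕ) (p : Fin M → Fin r → ZMod q)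
    (hD : ∀ i j, D i j ≤ leeDist (p i) (p j)) :
    (Even q → (r : ℚ) ≥ 8 / ((M : ℚ) ^ 2 * q) *
        ∑ i : Fin M, ∑ j : Fin M, if i < j then (D i j : ℚ) else 0) ∧
    (Odd q → (r : ℚ) ≥ 8 * q / ((M : ℚ) ^ 2 * ((q : ℚ) ^ 2 - 1)) *
        ∑ i : Fin M, ∑ j : Fin M, if i < j then (D i j : ℚ) else 0) := by
  have hT := two_mul_sum_sum_ite_lt_le D _ (fun i j => leeDist_comm (p i) (p j)) hD
  set T := ∑ i, ∑ j, if i < j then D i j else 0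
  have hcast : (∑ i : Fin M, ∑ j : Fin M, if i < j then (D i j : ℚ) else 0) = T := by
    push_cast [T, Nat.cast_ite]; rfl
  rw [hcast, ge_iff_le, ge_iff_le, div_mul_eq_mul_div, div_mul_eq_mul_div]
  refine ⟨fun he => div_le_of_le_mul₀ (by positivity) (by positivity) ?_, fun ho => ?_⟩
  · have h := mul_sum_sum_leeDist_le p (four_mul_sum_sum_leeDistSym_le_of_even hq he)
    rw [Fintype.card_fin] at h
    exact_mod_cast (by linarith : 8 * T ≤ r * (M ^ 2 * q))
  · have h := mul_sum_sum_leeDist_le p (four_mul_mul_sum_sum_leeDistSym_le_of_odd hq ho)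
    rw [Fintype.card_fin] at h
    have hq1 : 1 ≤ q ^ 2 := Nat.one_le_pow _ _ (by omega)
    have h8 : 8 * q * T ≤ r * (M ^ 2 * (q ^ 2 - 1)) := by nlinarith
    have hden : (0 : ℚ) ≤ (M : ℚ) ^ 2 * ((q : ℚ) ^ 2 - 1) := by
      exact_mod_cast Nat.zero_le (M ^ 2 * (q ^ 2 - 1))
    exact div_le_of_le_mul₀ hden (by positivity) (by exact_mod_cast h8)
end

section
/- (Plotkin low-rate bound for Lee codes) If C ⊆ Z_q^n has M ≥ 2 codewords and minimum Lee distance d_L, then d_L ≤ n(q²−1)M/(4q(M−1)) if q is odd, and d_L ≤ nqM/(4(M−1)) if q is even. -/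
/-!
Write `A c = {c, c + 1, …, c + ⌊q/2⌋ - 1} ⊆ ℤ/q` for the half-circle arc starting at `c`. The
Lee metric on `ℤ/q` is a cut metric: `2 d_L(a, b)` is the number of arcs `A c` containing exactly
one of `a, b`. Summing over ordered pairs of codewords, coordinate `i` contributes
`∑_c 2 K_c (M - K_c)`, where `K_c` counts the codewords whose `i`-th symbol lies in `A c`. Since
`∑_c K_c = ⌊q/2⌋ M`, Cauchy–Schwarz gives `q ∑_c K_c (M - K_c) ≤ ⌊q/2⌋ ⌈q/2⌉ M²`, so the sum of
all `M (M - 1)` pairwise distances, which is at least `d M (M - 1)`, is at most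
`n ⌊q/2⌋ ⌈q/2⌉ M² / q`; and `⌊q/2⌋ ⌈q/2⌉` is `(q² - 1)/4` or `q²/4`.
-/

open Finset

lemma sum_card_filter_not_iff {α : Type*} (s : Finset α) (p : α → Prop) [DecidablePred p] :
    ∑ x ∈ s, #{y ∈ s | ¬(p x ↔ p y)} = 2 * (#{x ∈ s | p x} * #{x ∈ s | ¬p x}) := by
  have hcard : ∀ x ∈ s, #{y ∈ s | ¬(p x ↔ p y)} = if p x then #{y ∈ s | ¬p y} else #{y ∈ s | p y} :=
    fun x _ => by split_ifs with hx <;> simp [hx]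
  rw [sum_congr rfl hcard, sum_ite, sum_const, sum_const, smul_eq_mul, smul_eq_mul]
  ring

lemma sum_sum_card_filter_not_iff {α β : Type*} (s : Finset α) (T : Finset β) (P : β → α → Prop)
    [∀ c, DecidablePred (P c)] :
    ∑ x ∈ s, ∑ y ∈ s, #{c ∈ T | ¬(P c x ↔ P c y)} =
      ∑ c ∈ T, 2 * (#{x ∈ s | P c x} * #{x ∈ s | ¬P c x}) := by
  simp_rw [← sum_card_filter_not_iff, card_filter]
  simp only [sum_comm (s := s) (t := T)]

lemma card_mul_sum_mul_sub_le {R β : Type*} [CommRing R] [LinearOrder R] [IsStrictOrderedRing R]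
    (T : Finset β) (K : β → R) (N : R) :
    #T * ∑ c ∈ T, K c * (N - K c) ≤ #T * N * ∑ c ∈ T, K c - (∑ c ∈ T, K c) ^ 2 := by
  have hcs := sq_sum_le_card_mul_sum_sq (s := T) (f := K)
  simp only [mul_sub, sum_sub_distrib, ← sum_mul, ← sq]
  linarith

lemma mul_card_mul_card_sub_one_le_sum_sum {α : Type*} [DecidableEq α] (s : Finset α)
    (δ : α → α → ℕ) {d : ℕ} (hd : ∀ x ∈ s, ∀ y ∈ s, x ≠ y → d ≤ δ x y) :
    d * (#s * (#s - 1)) ≤ ∑ x ∈ s, ∑ y ∈ s, δ x y := by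
  rw [← sum_product', mul_comm, Nat.mul_sub_one, ← offDiag_card, ← smul_eq_mul]
  refine (card_nsmul_le_sum _ _ _ fun p hp => ?_).trans
    (sum_le_sum_of_subset fun p hp => mem_product.2 ⟨(mem_offDiag.1 hp).1, (mem_offDiag.1 hp).2.1⟩)
  obtain ⟨hx, hy, hxy⟩ := mem_offDiag.1 hp
  exact hd _ hx _ hy hxy

lemma card_filter_range_not_iff_add_mod_lt_half (q t : ℕ) (ht : t < q) :
    #{v ∈ range q | ¬(v < q / 2 ↔ (v + t) % q < q / 2)} = 2 * min t (q - t) := by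
  have hmod : ∀ v < q, (v + t) % q = if v + t < q then v + t else v + t - q := by
    intro v hv
    split_ifs with h
    · exact Nat.mod_eq_of_lt h
    · rw [Nat.mod_eq_sub_mod (by omega), Nat.mod_eq_of_lt (by omega)]
  have card_Ico_union {a b c e : ℕ} (hbc : b ≤ c) :
      #(Ico a b ∪ Ico c e) = (b - a) + (e - c) := by
    rw [card_union_of_disjoint (disjoint_left.2 fun v hv hv' => by
      simp only [mem_Ico] at hv hv'; omega), Nat.card_Ico, Nat.card_Ico]
  rcases le_or_gt (2 * t) q with hc | hc
  · have hset : {v ∈ range q | ¬(v < q / 2 ↔ (v + t) % q < q / 2)} =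
        Ico (q / 2 - t) (q / 2) ∪ Ico (q - t) q := by
      ext v
      simp only [mem_filter, mem_range, mem_union, mem_Ico]
      by_cases hv : v < q
      · rw [hmod v hv]; split_ifs <;> omega
      · omega
    rw [hset, card_Ico_union (by omega)]
    omega
  · have hset : {v ∈ range q | ¬(v < q / 2 ↔ (v + t) % q < q / 2)} =
        Ico 0 (q - t) ∪ Ico (q / 2) (q / 2 + (q - t)) := by
      ext v
      simp only [mem_filter, mem_range, mem_union, mem_Ico]
      by_cases hv : v < q
      · rw [hmod v hv]; split_ifs <;> omega
      · omega
    rw [hset, card_Ico_union (by omega)]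
    omega

section LeeCount

variable {q : ℕ} [NeZero q]

lemma ZMod.card_filter_val (P : ℕ → Prop) [DecidablePred P] :
    #{u : ZMod q | P u.val} = #{v ∈ range q | P v} :=
  card_nbij' ZMod.val Nat.cast (fun u hu => by simp_all [ZMod.val_lt])
    (fun v hv => by simp_all [Nat.mod_eq_of_lt]) (fun u _ => ZMod.natCast_zmod_val u)
    (fun v hv => ZMod.val_cast_of_lt (mem_range.1 (mem_filter.1 hv).1))

lemma leeDistSym_eq_min (a b : ZMod q) :
    leeDistSym q a b = min (b - a).val (q - (b - a).val) := by
  rw [leeDistSym, ← neg_sub, ZMod.neg_val]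
  split_ifs with h <;> simp [h, min_comm]

/-- `(a - c).val < q / 2` says that `a` lies in the arc `{c, …, c + ⌊q/2⌋ - 1}`. -/
lemma two_mul_leeDistSym (a b : ZMod q) :
    2 * leeDistSym q a b = #{c : ZMod q | ¬((a - c).val < q / 2 ↔ (b - c).val < q / 2)} := by
  rw [leeDistSym_eq_min, ← card_filter_range_not_iff_add_mod_lt_half q _ (ZMod.val_lt (b - a)),
    ← ZMod.card_filter_val (fun v => ¬(v < q / 2 ↔ (v + (b - a).val) % q < q / 2))]
  refine card_equiv (Equiv.subLeft a) fun u => ?_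
  simp only [mem_filter, mem_univ, true_and, Equiv.subLeft_apply, sub_sub_cancel, ← ZMod.val_add,
    show b - (a - u) = u + (b - a) by ring]

lemma card_filter_sub_val_lt_half (a : ZMod q) :
    #{c : ZMod q | (a - c).val < q / 2} = q / 2 := by
  have hshift : #{c : ZMod q | (a - c).val < q / 2} = #{u : ZMod q | u.val < q / 2} :=
    card_equiv (Equiv.subLeft a) fun c => by simp
  have hrange : {v ∈ range q | v < q / 2} = range (q / 2) := by
    ext v
    simp only [mem_filter, mem_range]
    omega
  rw [hshift, ZMod.card_filter_val (· < q / 2), hrange, card_range]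

variable {α : Type*} (s : Finset α) (f : α → ZMod q)

lemma sum_card_filter_sub_val_lt_half :
    ∑ c : ZMod q, #{x ∈ s | (f x - c).val < q / 2} = q / 2 * #s := by
  have hdouble := sum_card_bipartiteAbove_eq_sum_card_bipartiteBelow (s := s) (t := univ)
    (r := fun x c => (f x - c).val < q / 2)
  simp only [bipartiteAbove, bipartiteBelow, card_filter_sub_val_lt_half] at hdouble
  rw [← hdouble, sum_const, smul_eq_mul, mul_comm]

lemma two_mul_sum_sum_leeDistSym :
    2 * ∑ x ∈ s, ∑ y ∈ s, leeDistSym q (f x) (f y) =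
      ∑ c : ZMod q, 2 * (#{x ∈ s | (f x - c).val < q / 2} * #{x ∈ s | ¬(f x - c).val < q / 2}) := by
  simp_rw [mul_sum, two_mul_leeDistSym]
  exact sum_sum_card_filter_not_iff s univ fun c x => (f x - c).val < q / 2

lemma mul_sum_sum_leeDistSym_le_s6 :
    q * ∑ x ∈ s, ∑ y ∈ s, leeDistSym q (f x) (f y) ≤ q / 2 * (q - q / 2) * #s ^ 2 := by
  set K : ZMod q → ℕ := fun c => #{x ∈ s | (f x - c).val < q / 2}
  have hK : ∀ c, K c ≤ #s := fun c => card_filter_le _ _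
  have hcompl : ∀ c, #{x ∈ s | ¬(f x - c).val < q / 2} = #s - K c := fun c =>
    Nat.eq_sub_of_add_eq' (card_filter_add_card_filter_not _)
  have hdist : ∑ x ∈ s, ∑ y ∈ s, (leeDistSym q (f x) (f y) : ℤ) = ∑ c, (K c : ℤ) * (#s - K c) := by
    have h2 := two_mul_sum_sum_leeDistSym s f
    simp only [hcompl, ← mul_sum] at h2
    have h2Z := congrArg (Nat.cast : ℕ → ℤ) (Nat.eq_of_mul_eq_mul_left two_pos h2)
    push_cast [Nat.cast_sub (hK _)] at h2Z
    exact h2Z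
  have hsum : ∑ c, (K c : ℤ) = (q / 2 : ℕ) * #s := by
    exact_mod_cast sum_card_filter_sub_val_lt_half s f
  have hcs := card_mul_sum_mul_sub_le univ (fun c => (K c : ℤ)) #s
  rw [card_univ, ZMod.card, hsum, ← hdist] at hcs
  rw [← Nat.cast_le (α := ℤ)]
  push_cast [Nat.cast_sub (Nat.div_le_self q 2)] at hcs ⊢
  linarith

end LeeCount

lemma mul_sum_sum_leeDist_le_s6 {q n : ℕ} [NeZero q] (C : Finset (Fin n → ZMod q)) :
    q * ∑ x ∈ C, ∑ y ∈ C, leeDist x y ≤ n * (q / 2 * (q - q / 2) * #C ^ 2) := by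
  have hswap : ∑ x ∈ C, ∑ y ∈ C, leeDist x y =
      ∑ i, ∑ x ∈ C, ∑ y ∈ C, leeDistSym q (x i) (y i) := by
    simp only [leeDist, sum_comm (s := C) (t := univ)]
  rw [hswap, mul_sum]
  calc ∑ i : Fin n, q * ∑ x ∈ C, ∑ y ∈ C, leeDistSym q (x i) (y i)
      ≤ ∑ _i : Fin n, q / 2 * (q - q / 2) * #C ^ 2 :=
        sum_le_sum fun i _ => mul_sum_sum_leeDistSym_le_s6 C fun x => x i
    _ = n * (q / 2 * (q - q / 2) * #C ^ 2) := by simp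

theorem plotkin_low_rate_bound_lee (q n : ℕ) (hq : 2 ≤ q)
    (C : Finset (Fin n → ZMod q)) (M d : ℕ) (hM : C.card = M) (hM2 : 2 ≤ M)
    (hd : ∀ x ∈ C, ∀ y ∈ C, x ≠ y → d ≤ leeDist x y) :
    (Odd q → (d : ℚ) ≤ (n : ℚ) * ((q : ℚ) ^ 2 - 1) * M / (4 * q * ((M : ℚ) - 1))) ∧
    (Even q → (d : ℚ) ≤ (n : ℚ) * q * M / (4 * ((M : ℚ) - 1))) := by
  have : NeZero q := ⟨by omega⟩
  have hbound : q * (d * (M * (M - 1))) ≤ n * (q / 2 * (q - q / 2) * M ^ 2) := by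
    subst hM
    exact (Nat.mul_le_mul_left q (mul_card_mul_card_sub_one_le_sum_sum C _ hd)).trans
      (mul_sum_sum_leeDist_le_s6 C)
  have hM1 : (0 : ℚ) < M - 1 := sub_pos.2 (by exact_mod_cast hM2)
  have hboundQ : (q : ℚ) * (d * (M - 1)) ≤ n * ((q / 2 : ℕ) * (q - (q / 2 : ℕ))) * M := by
    have := (Nat.cast_le (α := ℚ)).2 hbound
    push_cast [Nat.cast_sub (by omega : 1 ≤ M), Nat.cast_sub (Nat.div_le_self q 2)] at this
    refine le_of_mul_le_mul_right ?_ (by positivity : (0 : ℚ) < M)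
    linarith
  refine ⟨fun ⟨k, hk⟩ => ?_, fun ⟨k, hk⟩ => ?_⟩
  · rw [show q / 2 = k by omega, hk] at hboundQ
    rw [hk, le_div_iff₀ (by positivity)]
    push_cast at hboundQ ⊢
    linarith
  · rw [show q / 2 = k by omega, hk] at hboundQ
    rw [hk, le_div_iff₀ (by positivity)]
    push_cast at hboundQ ⊢
    refine le_of_mul_le_mul_right ?_ (by exact_mod_cast (by omega : 0 < k + k) : (0 : ℚ) < k + k)
    linarith
end

section
/- (Redundancy of repetition of parity for locally bounded functions) Let q ≥ 2, t ≥ 1, λ ≤ q/2, and r = ⌈t/⌊q/(2λ)⌋⌉. Define parity symbols p_i = 2(i−1)·⌊q/(2λ)⌋ mod q for i ∈ [λ]. Then for any distinct i, j ∈ [λ], the Lee distance d_L(p_i, p_j) ≥ 2⌊q/(2λ)⌋, and hence r repetitions give d_L({p_i}^r, {p_j}^r) ≥ 2t. -/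
lemma leeDistSym_comm (q : ℕ) (x y : ZMod q) : leeDistSym q x y = leeDistSym q y x := by
  unfold leeDistSym; exact min_comm _ _

lemma leeDistSym_key (q lam : ℕ) (hq : 2 ≤ q) (hlam : 2 * lam ≤ q) (a c : ℕ) (hac : a < c)
    (hc : c < lam) :
    2 * (q / (2 * lam)) ≤ leeDistSym q ((2 * a * (q / (2 * lam)) : ℕ) : ZMod q)
      ((2 * c * (q / (2 * lam)) : ℕ) : ZMod q) := by
  set b := q / (2 * lam) with hb
  have hlam1 : 1 ≤ lam := by omega
  have hb1 : 1 ≤ b := Nat.one_le_div_iff (by omega) |>.mpr hlam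
  have hmul : 2 * lam * b ≤ q := Nat.mul_div_le q (2 * lam)
  have hle : 2 * a * b ≤ 2 * c * b := Nat.mul_le_mul_right _ (by omega)
  set m := 2 * c * b - 2 * a * b with hm
  have hm_ub : m ≤ q - 2 * b := by
    have h1 : c ≤ lam - 1 := by omega
    have : 2 * c * b + 2 * b ≤ 2 * lam * b := by nlinarith [Nat.sub_add_cancel hlam1]
    omega
  have hm_lb : 2 * b ≤ m := by
    have : 2 * a * b + 2 * b ≤ 2 * c * b := by nlinarith
    omega
  have hmlt : m < q := by omega
  haveI : NeZero q := ⟨by omega⟩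
  have hcast : ((2 * c * b : ℕ) : ZMod q) - ((2 * a * b : ℕ) : ZMod q) = ((m : ℕ) : ZMod q) := by
    rw [hm, Nat.cast_sub hle]
  have hval : (((2 * c * b : ℕ) : ZMod q) - ((2 * a * b : ℕ) : ZMod q)).val = m := by
    rw [hcast, ZMod.val_natCast_of_lt hmlt]
  have hcast2 : ((2 * a * b : ℕ) : ZMod q) - ((2 * c * b : ℕ) : ZMod q)
      = ((q - m : ℕ) : ZMod q) := by
    have hmq : m ≤ q := le_of_lt hmlt
    rw [Nat.cast_sub hmq, hm, Nat.cast_sub hle, ZMod.natCast_self]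
    ring
  have hval2 : (((2 * a * b : ℕ) : ZMod q) - ((2 * c * b : ℕ) : ZMod q)).val = q - m := by
    rw [hcast2, ZMod.val_natCast_of_lt (by omega)]
  unfold leeDistSym
  rw [hval, hval2]
  omega

theorem locally_bounded_parity_symbols_dist (q t lam : ℕ) (hq : 2 ≤ q)
    (ht : 1 ≤ t) (hlam : 2 * lam ≤ q) (i j : Fin lam) (hij : i ≠ j) :
    2 * (q / (2 * lam)) ≤
      leeDistSym q ((2 * i.val * (q / (2 * lam)) : ℕ) : ZMod q)
        ((2 * j.val * (q / (2 * lam)) : ℕ) : ZMod q) ∧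
    2 * t ≤ ((t + q / (2 * lam) - 1) / (q / (2 * lam))) *
      leeDistSym q ((2 * i.val * (q / (2 * lam)) : ℕ) : ZMod q)
        ((2 * j.val * (q / (2 * lam)) : ℕ) : ZMod q) := by
  set b := q / (2 * lam) with hb
  have hb1 : 1 ≤ b := Nat.one_le_div_iff (by omega) |>.mpr hlam
  have h1 : 2 * b ≤ leeDistSym q ((2 * i.val * b : ℕ) : ZMod q) ((2 * j.val * b : ℕ) : ZMod q) := by
    rcases lt_or_gt_of_ne (Fin.val_ne_of_ne hij) with h | h
    · exact leeDistSym_key q lam hq hlam i.val j.val h j.isLt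
    · rw [leeDistSym_comm]
      exact leeDistSym_key q lam hq hlam j.val i.val h i.isLt
  refine ⟨h1, ?_⟩
  set r := (t + b - 1) / b with hr
  have hrb : t ≤ r * b := by
    have h0 : t + b - 1 = (t - 1) + b := by omega
    have h2 : r = (t - 1) / b + 1 := by
      rw [hr, h0, Nat.add_div_right _ (by omega)]
    have h3 := Nat.div_add_mod (t - 1) b
    have h4 : (t - 1) % b < b := Nat.mod_lt _ (by omega)
    have : r * b = b * ((t - 1) / b) + b := by rw [h2]; ring
    omega
  calc 2 * t ≤ 2 * (r * b) := by omega
    _ = r * (2 * b) := by ring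
    _ ≤ _ := Nat.mul_le_mul_left r h1
end
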